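/- Let Ω ⊂ ℝ² be bounded with |Ω| < ∞, f ∈ L²(Ω), and v(p) = ∫∫_Ω B(p,Q)|p−Q|^{−1} f(Q) dQ with |B| ≤ M. Then for every q ≥ 2 there is a constant C (independent of q and f) such that ∫∫_Ω |v|^q dp ≤ C^q q^{q/2} ‖f‖^q_{L²(Ω)}; i.e., v lies in every L^q(Ω) with norm growing at most like C√q. -/

import Mathlib

/-
Since |B| ≤ M, |v(p)| ≤ M ∫_Ω |p - Q|⁻¹ |f(Q)| dQ. Hölder's inequality with exponents
(q, 2, 2q/(q - 2)) applied to the splitting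
  |p - Q|⁻¹ |f| = (|p - Q|⁻¹ f²)^(1/q) · (|p - Q|^(-(2 - 2/q)))^(1/2) · (f²)^(1/2 - 1/q)
bounds |v(p)|^q by
  M^q · ∫_Ω |p - Q|⁻¹ f(Q)² dQ · (∫_Ω |p - Q|^(-(2 - 2/q)) dQ)^(q/2) · ‖f‖₂^(q - 2).
On a bounded planar set, ∫_Ω |p - Q|^(-s) dQ ≤ K / (2 - s) for 0 ≤ s < 2 (polar coordinates).
For s = 2 - 2/q this is K q / 2, whose (q/2)-th power is the source of the factor q^(q/2);
integrating in p and swapping the order of integration in the first factor (s = 1) gives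
∫_Ω |v|^q ≤ M^q K (K q / 2)^(q/2) ‖f‖₂^q.
-/

open MeasureTheory Set Metric ENNReal Module Function

/-- The rate `(d - s)⁻¹` is that of Lebesgue measure in dimension `d`, for which
`∫_{ball x R} |x - y|^(-s) dy` is a constant times `R^(d - s) / (d - s)`. -/
def RieszKernelBound {X : Type*} [PseudoEMetricSpace X] [MeasurableSpace X] (μ : Measure X)
    (d K : ℝ) : Prop :=
  ∀ᵐ x ∂μ, ∀ s : ℝ, 0 ≤ s → s < d → ∫⁻ y, edist x y ^ (-s) ∂μ ≤ ENNReal.ofReal (K / (d - s))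

section RieszKernel

variable {E : Type*} [NormedAddCommGroup E] [NormedSpace ℝ E] [FiniteDimensional ℝ E]
  [MeasurableSpace E] [BorelSpace E] [Nontrivial E] (μ : Measure E) [μ.IsAddHaarMeasure]

theorem integral_ball_zero_norm_rpow_neg {r s : ℝ} (hr : 0 ≤ r) (hs : s < finrank ℝ E) :
    ∫ x in ball (0 : E) r, ‖x‖ ^ (-s) ∂μ =
      finrank ℝ E * μ.real (ball 0 1) * (r ^ (finrank ℝ E - s) / (finrank ℝ E - s)) := by
  set n := finrank ℝ E
  have hn : (0 : ℝ) < n - s := sub_pos.mpr hs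
  have hball : ∀ x : E, (ball (0 : E) r).indicator (fun x ↦ ‖x‖ ^ (-s)) x
      = (Iio r).indicator (fun y ↦ y ^ (-s)) ‖x‖ := fun x ↦ by
    by_cases hx : ‖x‖ < r <;> simp [indicator, hx]
  have hpow : ∀ y ∈ Ioi (0 : ℝ), y ^ (n - 1) • (Iio r).indicator (fun y ↦ y ^ (-s)) y
      = (Iio r).indicator (fun y ↦ y ^ ((n : ℝ) - s - 1)) y := fun y hy ↦ by
    by_cases hyr : y ∈ Iio r
    · rw [indicator_of_mem hyr, indicator_of_mem hyr, smul_eq_mul, ← Real.rpow_natCast,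
        ← Real.rpow_add hy, Nat.cast_sub finrank_pos]
      congr 1
      ring
    · simp [hyr]
  have hradial : ∫ y in Ioi (0 : ℝ), y ^ (n - 1) • (Iio r).indicator (fun y ↦ y ^ (-s)) y
      = ∫ y in (0 : ℝ)..r, y ^ ((n : ℝ) - s - 1) := by
    rw [setIntegral_congr_fun measurableSet_Ioi hpow, setIntegral_indicator measurableSet_Iio,
      Ioi_inter_Iio, intervalIntegral.integral_of_le hr, integral_Ioc_eq_integral_Ioo]
  rw [← integral_indicator measurableSet_ball, funext hball, integral_fun_norm_addHaar μ,
    hradial, integral_rpow (Or.inl (by linarith)), sub_add_cancel,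
    Real.zero_rpow hn.ne', sub_zero, nsmul_eq_mul, smul_eq_mul, mul_assoc]

theorem lintegral_ball_edist_rpow_neg (x : E) {r s : ℝ} (hr : 0 ≤ r) (hs : s < finrank ℝ E) :
    ∫⁻ y in ball x r, edist x y ^ (-s) ∂μ =
      ENNReal.ofReal (finrank ℝ E * μ.real (ball 0 1) *
        (r ^ (finrank ℝ E - s) / (finrank ℝ E - s))) := by
  have htranslate : ∫⁻ y in ball x r, edist x y ^ (-s) ∂μ = ∫⁻ z in ball 0 r, ‖z‖ₑ ^ (-s) ∂μ := by
    rw [← (measurePreserving_add_left μ x).setLIntegral_comp_preimage_emb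
      (measurableEmbedding_addLeft x), preimage_add_left_ball, neg_add_cancel]
    congr 1 with z
    rw [enorm_eq_nnnorm, ← edist_zero_left, ← edist_add_left x 0 z, add_zero]
  have hint : IntegrableOn (fun z : E ↦ ‖z‖ ^ (-s)) (ball 0 r) μ :=
    integrableOn_ball_of_norm_le_rpow finrank_pos (C := 1) hs
      (.of_forall fun z ↦ by simp [abs_of_nonneg (Real.rpow_nonneg (norm_nonneg z) _)])
      (measurable_norm.pow_const _).aestronglyMeasurable
  rw [htranslate, ← integral_ball_zero_norm_rpow_neg μ hr hs,
    ofReal_integral_eq_lintegral_ofReal hint (.of_forall fun z ↦ by positivity)]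
  refine lintegral_congr_ae (ae_restrict_of_ae ?_)
  filter_upwards [Measure.ae_ne μ 0] with z hz
  rw [← ofReal_norm, ENNReal.ofReal_rpow_of_pos (norm_pos_iff.mpr hz)]

theorem Bornology.IsBounded.exists_rieszKernelBound {Ω : Set E} (hΩ : Bornology.IsBounded Ω) :
    ∃ K : ℝ, 0 ≤ K ∧ RieszKernelBound (μ.restrict Ω) (finrank ℝ E) K := by
  obtain ⟨R, hR, hΩR⟩ := hΩ.subset_ball_lt 1 0
  set n : ℝ := (finrank ℝ E : ℝ)
  refine ⟨n * μ.real (ball 0 1) * (2 * R) ^ n, by positivity, ?_⟩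
  filter_upwards [ae_restrict_of_ae_restrict_of_subset hΩR (ae_restrict_mem measurableSet_ball)]
    with x hx s hs0 hs
  have hΩx : Ω ⊆ ball x (2 * R) := fun y hy ↦ by
    have := dist_triangle_right y x 0
    rw [mem_ball] at hx ⊢
    linarith [mem_ball.mp (hΩR hy)]
  calc ∫⁻ y in Ω, edist x y ^ (-s) ∂μ
      ≤ ∫⁻ y in ball x (2 * R), edist x y ^ (-s) ∂μ := lintegral_mono_set hΩx
    _ = ENNReal.ofReal (n * μ.real (ball 0 1) * ((2 * R) ^ (n - s) / (n - s))) :=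
        lintegral_ball_edist_rpow_neg μ x (by linarith) hs
    _ ≤ _ := by
        rw [mul_div_assoc']
        gcongr
        · linarith
        · linarith

end RieszKernel

/-- All exponents are nonnegative, so no case distinction on `0` or `⊤` is needed. -/
theorem ENNReal.mul_eq_rpow_mul_rpow_mul_rpow (k g : ℝ≥0∞) {q : ℝ} (hq : 2 ≤ q) :
    k * g = (k * g ^ 2) ^ q⁻¹ * (k ^ (2 - 2 / q)) ^ (2⁻¹ : ℝ) * (g ^ 2) ^ (2⁻¹ - q⁻¹) := by
  have hq0 : 0 < q := by linarith
  have hq_inv : q⁻¹ ≤ 2⁻¹ := inv_anti₀ two_pos hq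
  have hk : k = k ^ q⁻¹ * k ^ ((2 - 2 / q) * 2⁻¹) := by
    rw [← rpow_add_of_nonneg _ _ (by positivity) (by field_simp; linarith)]
    convert (rpow_one k).symm using 2
    field_simp
    ring
  have hg : g = (g ^ 2) ^ q⁻¹ * (g ^ 2) ^ (2⁻¹ - q⁻¹) := by
    rw [← rpow_add_of_nonneg _ _ (by positivity) (sub_nonneg.mpr hq_inv), add_sub_cancel]
    exact_mod_cast (pow_rpow_inv_natCast two_ne_zero g).symm
  rw [mul_rpow_of_nonneg _ _ (by positivity), ← rpow_mul]
  nth_rewrite 1 [hk, hg]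
  ring

theorem ENNReal.lintegral_mul_le_rpow_mul_rpow_mul_rpow {α : Type*} [MeasurableSpace α]
    (μ : Measure α) {k g : α → ℝ≥0∞} (hk : AEMeasurable k μ) (hg : AEMeasurable g μ) {q : ℝ}
    (hq : 2 ≤ q) :
    ∫⁻ a, k a * g a ∂μ ≤ (∫⁻ a, k a * g a ^ 2 ∂μ) ^ q⁻¹ *
      (∫⁻ a, k a ^ (2 - 2 / q) ∂μ) ^ (2⁻¹ : ℝ) * (∫⁻ a, g a ^ 2 ∂μ) ^ (2⁻¹ - q⁻¹) := by
  have hq0 : 0 < q := by linarith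
  let F : Fin 3 → α → ℝ≥0∞ := ![fun a ↦ k a * g a ^ 2, fun a ↦ k a ^ (2 - 2 / q), fun a ↦ g a ^ 2]
  let θ : Fin 3 → ℝ := ![q⁻¹, 2⁻¹, 2⁻¹ - q⁻¹]
  have hF : ∀ i ∈ Finset.univ, AEMeasurable (F i) μ := by
    intro i _
    fin_cases i <;> simp [F] <;> fun_prop
  have hθ : ∑ i, θ i = 1 := by simp [θ, Fin.sum_univ_three]; ring
  have hθ_nonneg : ∀ i ∈ Finset.univ, 0 ≤ θ i := by
    intro i _
    fin_cases i <;> simp [θ]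
    · positivity
    · exact inv_anti₀ two_pos hq
  simpa [F, θ, Fin.prod_univ_three, ← mul_eq_rpow_mul_rpow_mul_rpow _ _ hq]
    using lintegral_prod_norm_pow_le Finset.univ hF hθ hθ_nonneg

theorem enorm_inv_dist_le {X : Type*} [PseudoMetricSpace X] (x y : X) :
    ‖(dist x y)⁻¹‖ₑ ≤ (edist x y)⁻¹ := by
  rcases eq_or_ne (dist x y) 0 with h | h
  · simp [h]
  · rw [enorm_inv h, Real.enorm_eq_ofReal dist_nonneg, edist_dist]

theorem enorm_integral_div_dist_mul_le {X : Type*} [PseudoMetricSpace X] [MeasurableSpace X]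
    (μ : Measure X) {b f : X → ℝ} {M : ℝ} (hb : ∀ y, |b y| ≤ M) (x : X) :
    ‖∫ y, b y / dist x y * f y ∂μ‖ₑ ≤ ENNReal.ofReal M * ∫⁻ y, (edist x y)⁻¹ * ‖f y‖ₑ ∂μ := by
  refine (enorm_integral_le_lintegral_enorm _).trans ?_
  rw [← lintegral_const_mul' _ _ ofReal_ne_top]
  refine lintegral_mono fun y ↦ ?_
  rw [div_eq_mul_inv, enorm_mul, enorm_mul, mul_assoc]
  gcongr
  · exact Real.enorm_eq_ofReal_abs _ ▸ ofReal_le_ofReal (hb y)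
  · exact enorm_inv_dist_le x y

theorem lintegral_rpow_lintegral_mul_le {α : Type*} [MeasurableSpace α] (μ : Measure α) [SFinite μ]
    {k : α → α → ℝ≥0∞} (hk : Measurable (uncurry k)) {g : α → ℝ≥0∞}
    (hg : AEMeasurable g μ) {q : ℝ} (hq : 2 ≤ q) {K L : ℝ≥0∞}
    (hK : ∀ᵐ y ∂μ, ∫⁻ x, k x y ∂μ ≤ K) (hL : ∀ᵐ x ∂μ, ∫⁻ y, k x y ^ (2 - 2 / q) ∂μ ≤ L) :
    ∫⁻ x, (∫⁻ y, k x y * g y ∂μ) ^ q ∂μ ≤ L ^ (q / 2) * K * (∫⁻ y, g y ^ 2 ∂μ) ^ (q / 2) := by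
  have hq0 : 0 < q := by linarith
  set Λ := ∫⁻ y, g y ^ 2 ∂μ
  have hk_left (x : α) : Measurable (k x) := hk.comp measurable_prodMk_left
  have hk_right (y : α) : Measurable (k · y) := hk.comp measurable_prodMk_right
  have hkg : AEMeasurable (uncurry fun x y ↦ k x y * g y ^ 2) (μ.prod μ) :=
    hk.aemeasurable.mul (hg.comp_snd.pow_const 2)
  have hpointwise : ∀ᵐ x ∂μ, (∫⁻ y, k x y * g y ∂μ) ^ q ≤
      L ^ (q / 2) * Λ ^ (q / 2 - 1) * ∫⁻ y, k x y * g y ^ 2 ∂μ := by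
    filter_upwards [hL] with x hx
    calc (∫⁻ y, k x y * g y ∂μ) ^ q
        ≤ ((∫⁻ y, k x y * g y ^ 2 ∂μ) ^ q⁻¹ * L ^ (2⁻¹ : ℝ) * Λ ^ (2⁻¹ - q⁻¹)) ^ q := by
          gcongr
          refine (ENNReal.lintegral_mul_le_rpow_mul_rpow_mul_rpow μ (hk_left x).aemeasurable hg
            hq).trans ?_
          gcongr
      _ = _ := by
          rw [mul_rpow_of_nonneg _ _ hq0.le, mul_rpow_of_nonneg _ _ hq0.le, rpow_inv_rpow hq0.ne',
            ← rpow_mul, ← rpow_mul]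
          have h₁ : 2⁻¹ * q = q / 2 := by ring
          have h₂ : (2⁻¹ - q⁻¹) * q = q / 2 - 1 := by field_simp
          rw [h₁, h₂]
          ring
  have hswap : ∫⁻ x, ∫⁻ y, k x y * g y ^ 2 ∂μ ∂μ ≤ K * Λ := by
    rw [lintegral_lintegral_swap hkg, ← lintegral_const_mul'' _ (hg.pow_const 2)]
    refine lintegral_mono_ae ?_
    filter_upwards [hK] with y hy
    rw [lintegral_mul_const _ (hk_right y)]
    gcongr
  have hΛ : Λ ^ (q / 2) = Λ ^ (q / 2 - 1) * Λ := by
    simpa using ENNReal.rpow_add_of_nonneg (x := Λ) (q / 2 - 1) 1 (by linarith) zero_le_one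
  calc ∫⁻ x, (∫⁻ y, k x y * g y ∂μ) ^ q ∂μ
      ≤ ∫⁻ x, L ^ (q / 2) * Λ ^ (q / 2 - 1) * ∫⁻ y, k x y * g y ^ 2 ∂μ ∂μ :=
        lintegral_mono_ae hpointwise
    _ = L ^ (q / 2) * Λ ^ (q / 2 - 1) * ∫⁻ x, ∫⁻ y, k x y * g y ^ 2 ∂μ ∂μ :=
        lintegral_const_mul'' _ hkg.lintegral_prod_right'
    _ ≤ L ^ (q / 2) * Λ ^ (q / 2 - 1) * (K * Λ) := by gcongr
    _ = L ^ (q / 2) * K * Λ ^ (q / 2) := by rw [hΛ]; ring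

theorem lintegral_enorm_sq_eq_ofReal_integral_sq {α : Type*} [MeasurableSpace α] {μ : Measure α}
    {f : α → ℝ} (hf : MemLp f 2 μ) :
    ∫⁻ a, ‖f a‖ₑ ^ 2 ∂μ = ENNReal.ofReal (∫ a, f a ^ 2 ∂μ) := by
  rw [ofReal_integral_eq_lintegral_ofReal hf.integrable_sq (.of_forall fun a ↦ sq_nonneg _)]
  congr 1 with a
  rw [Real.enorm_eq_ofReal_abs, ← ofReal_pow (abs_nonneg _), sq_abs]

section Potential

variable {X : Type*} [PseudoMetricSpace X] [MeasurableSpace X] [BorelSpace X]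
  [SecondCountableTopology X] (μ : Measure X) [SFinite μ]

theorem lintegral_rpow_lintegral_inv_edist_mul_le {K : ℝ} (hK : RieszKernelBound μ 2 K)
    {g : X → ℝ≥0∞} (hg : AEMeasurable g μ) {q : ℝ} (hq : 2 ≤ q) :
    ∫⁻ x, (∫⁻ y, (edist x y)⁻¹ * g y ∂μ) ^ q ∂μ ≤
      ENNReal.ofReal (K * q / 2) ^ (q / 2) * ENNReal.ofReal K * (∫⁻ y, g y ^ 2 ∂μ) ^ (q / 2) := by
  have hq0 : 0 < q := by linarith
  refine lintegral_rpow_lintegral_mul_le μ (by fun_prop) hg hq ?_ ?_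
  · filter_upwards [hK] with y hy
    have h := hy 1 zero_le_one one_lt_two
    simp_rw [rpow_neg_one, edist_comm y] at h
    norm_num at h
    exact h
  · filter_upwards [hK] with x hx
    have h := hx (2 - 2 / q) (by linarith [div_le_one_of_le₀ hq hq0.le])
      (by linarith [show 0 < 2 / q by positivity])
    simp_rw [inv_rpow, ← rpow_neg]
    convert h using 2
    field_simp
    ring

theorem lintegral_enorm_integral_div_dist_mul_rpow_le {K M : ℝ} (hK : RieszKernelBound μ 2 K)
    {B : X → X → ℝ} (hB : ∀ x y, |B x y| ≤ M) {f : X → ℝ} (hf : AEMeasurable f μ)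
    {q : ℝ} (hq : 2 ≤ q) :
    ∫⁻ x, ‖∫ y, B x y / dist x y * f y ∂μ‖ₑ ^ q ∂μ ≤ ENNReal.ofReal M ^ q *
      (ENNReal.ofReal (K * q / 2) ^ (q / 2) * ENNReal.ofReal K *
        (∫⁻ y, ‖f y‖ₑ ^ 2 ∂μ) ^ (q / 2)) := by
  have hq0 : 0 < q := by linarith
  calc ∫⁻ x, ‖∫ y, B x y / dist x y * f y ∂μ‖ₑ ^ q ∂μ
      ≤ ∫⁻ x, ENNReal.ofReal M ^ q * (∫⁻ y, (edist x y)⁻¹ * ‖f y‖ₑ ∂μ) ^ q ∂μ := by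
        refine lintegral_mono fun x ↦ ?_
        rw [← mul_rpow_of_nonneg _ _ hq0.le]
        gcongr
        exact enorm_integral_div_dist_mul_le μ (hB x) x
    _ = ENNReal.ofReal M ^ q * ∫⁻ x, (∫⁻ y, (edist x y)⁻¹ * ‖f y‖ₑ ∂μ) ^ q ∂μ :=
        lintegral_const_mul' _ _ (rpow_ne_top_of_nonneg hq0.le ofReal_ne_top)
    _ ≤ _ := by
        gcongr
        exact lintegral_rpow_lintegral_inv_edist_mul_le μ hK hf.enorm hq

end Potential

theorem integral_abs_rpow_le_toReal_lintegral {α : Type*} [MeasurableSpace α] (μ : Measure α)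
    (v : α → ℝ) {q : ℝ} (hq : 0 ≤ q) :
    ∫ a, |v a| ^ q ∂μ ≤ (∫⁻ a, ‖v a‖ₑ ^ q ∂μ).toReal := by
  refine (Real.le_norm_self _).trans ((norm_integral_le_lintegral_norm _).trans_eq ?_)
  congr 1
  refine lintegral_congr fun a ↦ ?_
  rw [Real.norm_of_nonneg (by positivity), ← ofReal_rpow_of_nonneg (abs_nonneg _) hq,
    Real.enorm_eq_ofReal_abs]

theorem rpow_mul_rpow_mul_le {M K q : ℝ} (hM : 0 ≤ M) (hK : 0 ≤ K) (hq : 2 ≤ q) :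
    M ^ q * (K * q / 2) ^ (q / 2) * K ≤ ((|M| + 1) * (K + 1)) ^ q * q ^ (q / 2) := by
  have hq0 : 0 ≤ q := by linarith
  have hM' : M ^ q ≤ (|M| + 1) ^ q := by
    gcongr
    linarith [le_abs_self M]
  have hK' : (K / 2) ^ (q / 2) * K ≤ (K + 1) ^ q := by
    calc (K / 2) ^ (q / 2) * K ≤ (K + 1) ^ (q / 2) * (K + 1) ^ (q / 2) := by
          gcongr
          · linarith
          · exact (le_add_of_nonneg_right zero_le_one).trans
              (Real.self_le_rpow_of_one_le (by linarith) (by linarith))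
      _ = (K + 1) ^ q := by rw [← Real.rpow_add (by linarith), add_halves]
  calc M ^ q * (K * q / 2) ^ (q / 2) * K = M ^ q * ((K / 2) ^ (q / 2) * K) * q ^ (q / 2) := by
        rw [mul_div_right_comm, Real.mul_rpow (by positivity) hq0]
        ring
    _ ≤ (|M| + 1) ^ q * (K + 1) ^ q * q ^ (q / 2) := by gcongr
    _ = ((|M| + 1) * (K + 1)) ^ q * q ^ (q / 2) := by
        rw [Real.mul_rpow (by positivity) (by positivity)]

theorem stmt_2_general (Ω : Set (EuclideanSpace ℝ (Fin 2)))
    (hΩb : Bornology.IsBounded Ω) (M : ℝ) :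
    ∃ C : ℝ, 0 < C ∧
      ∀ (f : EuclideanSpace ℝ (Fin 2) → ℝ)
        (B : EuclideanSpace ℝ (Fin 2) → EuclideanSpace ℝ (Fin 2) → ℝ)
        (v : EuclideanSpace ℝ (Fin 2) → ℝ),
        MemLp f 2 (volume.restrict Ω) →
        Measurable (Function.uncurry B) →
        (∀ p Q, |B p Q| ≤ M) →
        (∀ p, v p = ∫ Q in Ω, B p Q / dist p Q * f Q) →
        ∀ q : ℝ, 2 ≤ q →
          ∫ p in Ω, |v p| ^ q ≤
            C ^ q * q ^ (q / 2) * (Real.sqrt (∫ Q in Ω, (f Q) ^ 2)) ^ q := by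
  obtain ⟨K, hK0, hK⟩ := hΩb.exists_rieszKernelBound volume
  rw [finrank_euclideanSpace_fin, Nat.cast_ofNat] at hK
  refine ⟨(|M| + 1) * (K + 1), by positivity, fun f B v hf _ hM hv q hq ↦ ?_⟩
  have hq0 : 0 < q := by linarith
  have hM0 : 0 ≤ M := (abs_nonneg _).trans (hM 0 0)
  set F := ∫ Q in Ω, f Q ^ 2
  have hF : 0 ≤ F := integral_nonneg fun Q ↦ sq_nonneg _
  have hv_lintegral : ∫⁻ p in Ω, ‖v p‖ₑ ^ q ≤
      ENNReal.ofReal (M ^ q * (K * q / 2) ^ (q / 2) * K * F ^ (q / 2)) := by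
    have h := lintegral_enorm_integral_div_dist_mul_rpow_le _ hK hM hf.1.aemeasurable hq
    simp only [← hv] at h
    rwa [lintegral_enorm_sq_eq_ofReal_integral_sq hf, ofReal_rpow_of_nonneg hM0 hq0.le,
      ofReal_rpow_of_nonneg (by positivity) (by positivity),
      ofReal_rpow_of_nonneg hF (by positivity),
      ← ofReal_mul (by positivity), ← ofReal_mul (by positivity), ← ofReal_mul (by positivity),
      ← mul_assoc, ← mul_assoc] at h
  calc ∫ p in Ω, |v p| ^ q ≤ (∫⁻ p in Ω, ‖v p‖ₑ ^ q).toReal :=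
        integral_abs_rpow_le_toReal_lintegral _ v hq0.le
    _ ≤ M ^ q * (K * q / 2) ^ (q / 2) * K * F ^ (q / 2) :=
        toReal_le_of_le_ofReal (by positivity) hv_lintegral
    _ ≤ ((|M| + 1) * (K + 1)) ^ q * q ^ (q / 2) * F ^ (q / 2) :=
        mul_le_mul_of_nonneg_right (rpow_mul_rpow_mul_le hM0 hK0 hq) (by positivity)
    _ = ((|M| + 1) * (K + 1)) ^ q * q ^ (q / 2) * Real.sqrt F ^ q := by
        rw [Real.sqrt_eq_rpow, ← Real.rpow_mul hF, one_div_mul_eq_div]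

/-- The potential `v(p) = ∫_Ω B(p,Q)|p-Q|⁻¹ f(Q) dQ` lies in every `L^q(Ω)` with
`∫_Ω |v|^q ≤ C^q q^{q/2} ‖f‖_{L²}^q`, i.e. with `L^q`-norm growing at most like `C√q`. -/
theorem stmt_2 (Ω : Set (EuclideanSpace ℝ (Fin 2))) (hΩm : MeasurableSet Ω)
    (hΩb : Bornology.IsBounded Ω) (M : ℝ) :
    ∃ C : ℝ, 0 < C ∧
      ∀ (f : EuclideanSpace ℝ (Fin 2) → ℝ)
        (B : EuclideanSpace ℝ (Fin 2) → EuclideanSpace ℝ (Fin 2) → ℝ)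
        (v : EuclideanSpace ℝ (Fin 2) → ℝ),
        MemLp f 2 (volume.restrict Ω) →
        Measurable (Function.uncurry B) →
        (∀ p Q, |B p Q| ≤ M) →
        (∀ p, v p = ∫ Q in Ω, B p Q / dist p Q * f Q) →
        ∀ q : ℝ, 2 ≤ q →
          ∫ p in Ω, |v p| ^ q ≤
            C ^ q * q ^ (q / 2) * (Real.sqrt (∫ Q in Ω, (f Q) ^ 2)) ^ q :=
  stmt_2_general Ω hΩb M
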